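/- arXiv:2210.07306 — 3 statements merged into one kernel-verified Lean document; each statement's English description precedes it below -/
import Mathlib

section
/- For each fixed nonzero integer x, all sufficiently large integers t with t ≢ x (mod 2) satisfy ã₁(x, t) ≠ 0. -/
open Complex Real Filter Asymptotics

noncomputable section

/-- Number of turns of the checker path with `T` moves whose set of indices of
rightward moves (among moves `0, …, T-1`) is `R`. -/
def turnsOf (T : ℕ) (R : Finset ℕ) : ℕ :=
  ((Finset.Ico 1 T).filter fun i => ¬((i ∈ R) ↔ (i - 1 ∈ R))).card

/-- The Feynman-checkers wave function on the integer lattice, with `μ = m·ε`: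
`waveA X T μ = a(X·ε, T·ε, m, ε)`.  A checker path from `(0,0)` to `(X·ε, T·ε)`
consists of `T` moves, each `(ε,ε)` ("right") or `(-ε,ε)` ("left"); it is
determined by the set `R ⊆ {0,…,T-1}` of indices of its rightward moves.  The
path ends at `X·ε` iff `R.card - (T - R.card) = X`, and its second point is
`(ε,ε)` iff `0 ∈ R`. -/
def waveA (X : ℤ) (T : ℕ) (μ : ℝ) : ℂ :=
  (((1 + μ ^ 2) ^ ((1 - (T : ℝ)) / 2) : ℝ) : ℂ) * Complex.I *
    ∑ R ∈ (Finset.range T).powerset,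
      if 0 ∈ R ∧ 2 * (R.card : ℤ) - (T : ℤ) = X then
        (-Complex.I * (μ : ℂ)) ^ turnsOf T R
      else 0

/-- The wave function `a(x, t, m, ε)` for lattice points `(x,t) ∈ εℤ²`. -/
def wf (x t m ε : ℝ) : ℂ := waveA ⌊x / ε⌋ ⌊t / ε⌋.toNat (m * ε)

/-- `ã₁(x, t, m, ε) = Re a(x, t+ε, m, ε)`. -/
def a1 (x t m ε : ℝ) : ℝ := (wf x (t + ε) m ε).re

/-- `ã₂(x, t, m, ε) = Im a(x+ε, t+ε, m, ε)`. -/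
def a2 (x t m ε : ℝ) : ℝ := (wf (x + ε) (t + ε) m ε).im

end

/-!
With `m = ε = 1`, a checker path to `(x, t + 1)` has `c = (t + 1 + x) / 2` rightward and
`l = (t + 1 - x) / 2` leftward moves. Splitting off the last move gives a two-term recursion in
`t`, whose solution is `ã₁(x, t) = 2^(-t/2) ∑ⱼ (-1)ʲ C(c-1, j) C(l-1, j)`, the coefficient of
`X^(l-1)` in `(1 - X)^(c-1) (1 + X)^(l-1)`. For fixed `d = c - l > 0` this is the coefficient of
`X^b` in `(1 - X)^d (1 - X²)^b`, `b = l - 1`. Writing `b = 2h + e` with `e < 2`, it equals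
`±C(b, h) P(h) / ((h + e + 1)⋯(h + e + d))` for a polynomial `P` independent of `h` with
`P(0) = C(d, e) (e + 1)⋯(e + d) > 0`, so it vanishes for only finitely many `h`; `d < 0` follows
by the symmetry of the sum.
-/

open Polynomial Finset

lemma coeff_one_sub_X_pow (a n : ℕ) :
    (((1 : ℤ[X]) - X) ^ a).coeff n = (-1 : ℤ) ^ n * a.choose n := by
  have term : ∀ k, ((-X : ℤ[X]) ^ k * 1 ^ (a - k) * (a.choose k : ℤ[X])).coeff n =
      if n = k then (-1 : ℤ) ^ k * a.choose k else 0 := fun k => by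
    rw [neg_pow, one_pow, mul_one, mul_comm, ← C_eq_natCast, ← mul_assoc, ← C_1, ← C_neg, ← C_pow,
      ← C_mul, coeff_C_mul_X_pow, mul_comm]
  rw [sub_eq_neg_add, add_pow, finsetSum_coeff]
  simp_rw [term]
  rw [sum_ite_eq]
  split_ifs with h
  · rfl
  · simp [Nat.choose_eq_zero_of_lt (by simpa [Nat.lt_succ_iff] using h : a < n)]

lemma coeff_one_sub_X_sq_pow (b m : ℕ) :
    (((1 : ℤ[X]) - X ^ 2) ^ b).coeff m =
      if 2 ∣ m then (-1 : ℤ) ^ (m / 2) * b.choose (m / 2) else 0 := by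
  have : ((1 : ℤ[X]) - X ^ 2) ^ b = expand ℤ 2 ((1 - X) ^ b) := by simp
  rw [this, coeff_expand two_pos, coeff_one_sub_X_pow]

lemma coeff_one_sub_X_pow_mul (d n : ℕ) (p : ℤ[X]) (hd : d ≤ n) :
    (((1 : ℤ[X]) - X) ^ d * p).coeff n =
      ∑ j ∈ range (d + 1), (-1 : ℤ) ^ j * d.choose j * p.coeff (n - j) := by
  rw [coeff_mul, Nat.sum_antidiagonal_eq_sum_range_succ_mk,
    ← sum_subset (range_subset_range.2 (Nat.succ_le_succ hd))]
  · simp only [coeff_one_sub_X_pow]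
  · intro j _ hj
    have hdj : d < j := by simpa [Nat.lt_succ_iff] using hj
    simp [coeff_one_sub_X_pow, Nat.choose_eq_zero_of_lt hdj]

def altChooseSum (a b : ℕ) : ℤ := ∑ j ∈ range (b + 1), (-1 : ℤ) ^ j * a.choose j * b.choose j

lemma altChooseSum_eq_coeff (a b : ℕ) :
    altChooseSum a b = (((1 : ℤ[X]) - X) ^ a * (1 + X) ^ b).coeff b := by
  rw [coeff_mul, Nat.sum_antidiagonal_eq_sum_range_succ_mk, altChooseSum]
  refine sum_congr rfl fun j hj => ?_
  rw [coeff_one_sub_X_pow, coeff_one_add_X_pow,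
    Nat.choose_symm (by simpa [Nat.lt_succ_iff] using hj)]

lemma altChooseSum_comm (a b : ℕ) : altChooseSum a b = altChooseSum b a := by
  have extend : ∀ a b, altChooseSum a b =
      ∑ j ∈ range (a + b + 1), (-1 : ℤ) ^ j * a.choose j * b.choose j :=
    fun a b => sum_subset (range_subset_range.2 (by omega)) fun j _ hj => by
      simp [Nat.choose_eq_zero_of_lt (by simp at hj; omega : b < j)]
  rw [extend, extend, add_comm a]
  exact sum_congr rfl fun j _ => by ring

lemma altChooseSum_add_eq_coeff (b d : ℕ) :
    altChooseSum (b + d) b = (((1 : ℤ[X]) - X) ^ d * (1 - X ^ 2) ^ b).coeff b := by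
  rw [altChooseSum_eq_coeff, show (1 : ℤ[X]) - X ^ 2 = (1 - X) * (1 + X) by ring, mul_pow, pow_add]
  ring_nf

lemma Nat.choose_sub_mul_ascFactorial {n k s : ℕ} (hsk : s ≤ k) (hkn : k ≤ n) :
    n.choose (k - s) * (n - k + 1).ascFactorial s = n.choose k * k.descFactorial s := by
  refine Nat.eq_of_mul_eq_mul_right (mul_pos (k - s).factorial_pos (n - k).factorial_pos) ?_
  calc n.choose (k - s) * (n - k + 1).ascFactorial s * ((k - s).factorial * (n - k).factorial)
      = n.choose (k - s) * (k - s).factorial * (n - (k - s)).factorial := by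
        rw [show n - (k - s) = n - k + s by omega, ← Nat.factorial_mul_ascFactorial]; ring
    _ = n.choose k * k.factorial * (n - k).factorial := by
        rw [Nat.choose_mul_factorial_mul_factorial (by omega),
          Nat.choose_mul_factorial_mul_factorial hkn]
    _ = n.choose k * k.descFactorial s * ((k - s).factorial * (n - k).factorial) := by
        rw [← Nat.factorial_mul_descFactorial hsk]; ring

/-- `j = 2s + e` indexes the terms of `altChooseSum (b + d) b` that survive for `b = 2h + e`; the
factor `(h + e + 1)⋯(h + e + d)` clears the denominators of
`C(b, h - s) / C(b, h) = h⋯(h - s + 1) / ((h + e + 1)⋯(h + e + s))`. -/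
noncomputable def altChooseSumPoly (d e : ℕ) : ℤ[X] :=
  ∑ j ∈ range (d + 1), if j % 2 = e then
    C ((-1 : ℤ) ^ (j / 2) * d.choose j) * descPochhammer ℤ (j / 2) *
      (ascPochhammer ℤ (d - j / 2)).comp (X + C ((e + 1 + j / 2 : ℕ) : ℤ))
  else 0

lemma altChooseSumPoly_eval (d e : ℕ) (z : ℤ) :
    (altChooseSumPoly d e).eval z = ∑ j ∈ range (d + 1), if j % 2 = e then
      (-1 : ℤ) ^ (j / 2) * d.choose j * (descPochhammer ℤ (j / 2)).eval z *
        (ascPochhammer ℤ (d - j / 2)).eval (z + (e + 1 + j / 2 : ℕ))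
    else 0 := by
  simp only [altChooseSumPoly, eval_finsetSum, apply_ite (eval z), eval_mul, eval_C, eval_comp,
    eval_add, eval_X, eval_zero]

lemma altChooseSumPoly_ne_zero {d e : ℕ} (he : e < 2) (hed : e ≤ d) : altChooseSumPoly d e ≠ 0 := by
  refine fun h => (ne_of_gt ?_) (congrArg (eval 0) h)
  rw [altChooseSumPoly_eval, sum_eq_single e]
  · rw [if_pos (Nat.mod_eq_of_lt he), Nat.div_eq_of_lt he]
    simp only [eval_zero, pow_zero, one_mul, descPochhammer_zero, eval_one, mul_one, zero_add]
    exact mul_pos (by exact_mod_cast Nat.choose_pos hed) (ascPochhammer_pos _ _ (by positivity))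
  · intro j _ hj
    split_ifs with hje
    · rw [descPochhammer_eval_zero, if_neg (by omega)]
      ring
    · rfl
  · intro h; simp at h; omega

lemma altChooseSum_add_mul_ascFactorial {b d h e : ℕ} (hb : b = 2 * h + e) (he : e < 2)
    (hd : d ≤ h) :
    altChooseSum (b + d) b * (h + e + 1).ascFactorial d =
      (-1) ^ (h + e) * b.choose h * (altChooseSumPoly d e).eval (h : ℤ) := by
  rw [altChooseSum_add_eq_coeff, coeff_one_sub_X_pow_mul _ _ _ (by omega), altChooseSumPoly_eval,
    sum_mul, mul_sum]
  refine sum_congr rfl fun j hj => ?_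
  simp only [mem_range] at hj
  rw [coeff_one_sub_X_sq_pow]
  split_ifs with hdvd hpar hpar
  · set s := j / 2
    have hjs : j = 2 * s + e := by omega
    have hs : (b - j) / 2 = h - s := by omega
    have sign : (-1 : ℤ) ^ j * (-1) ^ (h - s) = (-1) ^ (h + e) * (-1) ^ s := by
      obtain ⟨k, rfl⟩ : ∃ k, h = s + k := ⟨h - s, by omega⟩
      rw [hjs, Nat.add_sub_cancel_left]
      ring
    have key : b.choose (h - s) * (h + e + 1).ascFactorial d =
        b.choose h * h.descFactorial s * (h + e + 1 + s).ascFactorial (d - s) := by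
      have hbh : b - h + 1 = h + e + 1 := by omega
      rw [← Nat.add_sub_of_le (show s ≤ d by omega), ← Nat.ascFactorial_mul_ascFactorial,
        Nat.add_sub_cancel_left, ← mul_assoc, ← hbh,
        Nat.choose_sub_mul_ascFactorial (show s ≤ h by omega) (show h ≤ b by omega)]
    have hshift : (h : ℤ) + (e + 1 + s : ℕ) = (h + e + 1 + s : ℕ) := by push_cast; ring
    rw [hs, descPochhammer_eval_eq_descFactorial, hshift, ← ascPochhammer_eval_cast,
      ascPochhammer_nat_eq_ascFactorial]
    calc (-1 : ℤ) ^ j * d.choose j * ((-1) ^ (h - s) * b.choose (h - s)) *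
          (h + e + 1).ascFactorial d
        = ((-1) ^ j * (-1) ^ (h - s)) * d.choose j *
            ((b.choose (h - s) * (h + e + 1).ascFactorial d : ℕ) : ℤ) := by push_cast; ring
      _ = _ := by rw [sign, key]; push_cast; ring
  · omega
  · omega
  · simp

lemma eventually_eval_natCast_ne_zero {R : Type*} [CommRing R] [IsDomain R] [CharZero R]
    {p : R[X]} (hp : p ≠ 0) : ∀ᶠ n : ℕ in atTop, p.eval (n : R) ≠ 0 := by
  rw [← Nat.cofinite_eq_atTop, eventually_cofinite]
  simpa using (finite_setOfPred_isRoot hp).preimage Nat.cast_injective.injOn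

theorem eventually_altChooseSum_add_ne_zero {d : ℕ} (hd : d ≠ 0) :
    ∀ᶠ b in atTop, altChooseSum (b + d) b ≠ 0 := by
  have hpoly : ∀ᶠ h : ℕ in atTop, d ≤ h ∧ ∀ e < 2, (altChooseSumPoly d e).eval (h : ℤ) ≠ 0 := by
    have h0 : altChooseSumPoly d 0 ≠ 0 := altChooseSumPoly_ne_zero two_pos (by omega)
    have h1 : altChooseSumPoly d 1 ≠ 0 := altChooseSumPoly_ne_zero one_lt_two (by omega)
    filter_upwards [eventually_ge_atTop d, eventually_eval_natCast_ne_zero h0,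
      eventually_eval_natCast_ne_zero h1] with h hdh h0 h1
    refine ⟨hdh, fun e he => ?_⟩
    interval_cases e <;> assumption
  filter_upwards [(Nat.tendsto_div_const_atTop two_ne_zero).eventually hpoly]
    with b ⟨hdh, hne⟩ hzero
  have hb := Nat.mod_lt b two_pos
  have := altChooseSum_add_mul_ascFactorial (b := b) (by omega) hb hdh
  rw [hzero, zero_mul, eq_comm] at this
  refine hne _ hb ((mul_eq_zero.1 this).resolve_left (mul_ne_zero (pow_ne_zero _ (by norm_num)) ?_))
  exact_mod_cast (Nat.choose_pos (Nat.div_le_self b 2)).ne'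

lemma turnsOf_succ {T : ℕ} (hT : 1 ≤ T) (R : Finset ℕ) :
    turnsOf (T + 1) R = turnsOf T R + if (T ∈ R ↔ T - 1 ∈ R) then 0 else 1 := by
  unfold turnsOf
  rw [Nat.Ico_succ_right_eq_insert_Ico hT, filter_insert]
  split_ifs with h
  · rfl
  · rw [card_insert_of_notMem (by simp)]

lemma turnsOf_insert_of_le {T n : ℕ} (h : T ≤ n) (R : Finset ℕ) :
    turnsOf T (insert n R) = turnsOf T R := by
  unfold turnsOf
  congr 1
  refine filter_congr fun i hi => ?_
  simp only [mem_Ico] at hi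
  simp [mem_insert, show i ≠ n by omega, show i - 1 ≠ n by omega]

noncomputable def checkerPathSum (T c : ℕ) (b : Bool) : ℂ :=
  ∑ R ∈ (range T).powerset,
    if 0 ∈ R ∧ #R = c ∧ (T - 1 ∈ R ↔ b) then (-I) ^ turnsOf T R else 0

lemma checkerPathSum_succ {T : ℕ} (hT : 1 ≤ T) (c : ℕ) :
    checkerPathSum (T + 1) (c + 1) true =
        checkerPathSum T c true + -I * checkerPathSum T c false ∧
      checkerPathSum (T + 1) c false = checkerPathSum T c false + -I * checkerPathSum T c true := by
  constructor <;>
  · unfold checkerPathSum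
    rw [range_add_one, sum_powerset_insert (β := ℂ) notMem_range_self, mul_sum,
      ← sum_add_distrib, ← sum_add_distrib]
    refine sum_congr rfl fun R hR => ?_
    have hTR : T ∉ R := fun h => by simpa using mem_powerset.1 hR h
    rw [turnsOf_succ hT, turnsOf_succ hT, turnsOf_insert_of_le le_rfl, card_insert_of_notMem hTR]
    by_cases h0 : 0 ∈ R <;> by_cases hc : #R = c <;> by_cases hl : T - 1 ∈ R <;>
      simp [h0, hc, hl, hTR, show 0 ≠ T by omega, show T - 1 ≠ T by omega, pow_succ, mul_comm]

lemma checkerPathSum_zero (T : ℕ) (b : Bool) : checkerPathSum T 0 b = 0 :=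
  sum_eq_zero fun R _ => if_neg fun ⟨h0, hc, _⟩ => by simp [card_eq_zero.1 hc] at h0

lemma checkerPathSum_self (T : ℕ) (b : Bool) :
    checkerPathSum (T + 1) (T + 1) b = if b then 1 else 0 := by
  unfold checkerPathSum
  rw [sum_eq_single (range (T + 1))]
  · have : turnsOf (T + 1) (range (T + 1)) = 0 := by
      simp only [turnsOf, card_eq_zero, filter_eq_empty_iff, mem_Ico, mem_range]
      omega
    cases b <;> simp [this]
  · intro R hR hne
    rw [if_neg fun ⟨_, hc, _⟩ => hne (eq_of_subset_of_card_le (mem_powerset.1 hR) (by simp [hc]))]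
  · simp

lemma coeff_one_sub_X_mul_succ (p : ℤ[X]) (n : ℕ) :
    ((1 - X) * p).coeff (n + 1) = p.coeff (n + 1) - p.coeff n := by
  rw [sub_mul, one_mul, coeff_sub, coeff_X_mul]

lemma coeff_one_add_X_mul_succ (p : ℤ[X]) (n : ℕ) :
    ((1 + X) * p).coeff (n + 1) = p.coeff (n + 1) + p.coeff n := by
  rw [add_mul, one_mul, coeff_add, coeff_X_mul]

theorem checkerPathSum_eq_coeff (r l : ℕ) :
    checkerPathSum (r + l + 2) (r + 1) true =
        ((((1 : ℤ[X]) - X) ^ r * (1 + X) ^ l).coeff (l + 1) : ℤ) ∧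
      checkerPathSum (r + l + 2) (r + 1) false =
        -I * ((((1 : ℤ[X]) - X) ^ r * (1 + X) ^ l).coeff l : ℤ) := by
  constructor
  · cases r with
    | zero =>
      rw [show 0 + l + 2 = l + 1 + 1 by ring, (checkerPathSum_succ (by omega) 0).1,
        checkerPathSum_zero, checkerPathSum_zero]
      simp [coeff_one_add_X_pow]
    | succ r =>
      have ih := checkerPathSum_eq_coeff r l
      rw [show r + 1 + l + 2 = r + l + 2 + 1 by ring, (checkerPathSum_succ (by omega) (r + 1)).1,
        ih.1, ih.2, pow_succ', mul_assoc, coeff_one_sub_X_mul_succ]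
      push_cast
      linear_combination (((((1 : ℤ[X]) - X) ^ r * (1 + X) ^ l).coeff l : ℤ) : ℂ) * I_mul_I
  · cases l with
    | zero =>
      rw [show r + 0 + 2 = r + 1 + 1 by ring, (checkerPathSum_succ (by omega) (r + 1)).2,
        checkerPathSum_self, checkerPathSum_self]
      simp [coeff_one_sub_X_pow]
    | succ l =>
      have ih := checkerPathSum_eq_coeff r l
      rw [show r + (l + 1) + 2 = r + l + 2 + 1 by ring, (checkerPathSum_succ (by omega) (r + 1)).2,
        ih.1, ih.2, pow_succ', mul_left_comm, coeff_one_add_X_mul_succ]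
      push_cast
      ring
termination_by r + l

lemma sum_ite_eq_checkerPathSum (T c : ℕ) :
    (∑ R ∈ (range T).powerset,
      if 0 ∈ R ∧ 2 * (#R : ℤ) - T = 2 * c - T then (-I) ^ turnsOf T R else 0) =
      checkerPathSum T c true + checkerPathSum T c false := by
  unfold checkerPathSum
  rw [← sum_add_distrib]
  refine sum_congr rfl fun R _ => ?_
  have hc : 2 * (#R : ℤ) - T = 2 * c - T ↔ #R = c := by omega
  by_cases hl : T - 1 ∈ R <;> simp [hc, hl]

lemma re_waveA_one (r l : ℕ) :
    (waveA ((r : ℤ) - l) (r + l + 2) 1).re =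
      2 ^ ((1 - (r + l + 2 : ℕ)) / 2 : ℝ) * altChooseSum r l := by
  have hx : (r : ℤ) - l = 2 * ((r + 1 : ℕ) : ℤ) - ((r + l + 2 : ℕ) : ℤ) := by push_cast; ring
  rw [waveA, hx]
  simp only [ofReal_one, mul_one]
  rw [sum_ite_eq_checkerPathSum, (checkerPathSum_eq_coeff r l).1, (checkerPathSum_eq_coeff r l).2,
    altChooseSum_eq_coeff]
  norm_num [mul_re, mul_im]

lemma a1_eq_altChooseSum (r l : ℕ) :
    a1 (((r : ℤ) - l : ℤ) : ℝ) (((r : ℤ) + l + 1 : ℤ) : ℝ) 1 1 =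
      2 ^ ((1 - (r + l + 2 : ℕ)) / 2 : ℝ) * altChooseSum r l := by
  rw [← re_waveA_one, a1, wf, div_one, div_one, Int.floor_intCast, one_mul,
    show (((r : ℤ) + l + 1 : ℤ) : ℝ) + 1 = ((r + l + 2 : ℕ) : ℤ) by push_cast; ring,
    Int.floor_intCast, Int.toNat_natCast]

theorem stmt7 (x : ℤ) (hx : x ≠ 0) :
    ∃ t₀ : ℤ, ∀ t : ℤ, t₀ < t → t % 2 ≠ x % 2 → a1 (x : ℝ) (t : ℝ) 1 1 ≠ 0 := by
  obtain ⟨B, hB⟩ :=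
    eventually_atTop.1 (eventually_altChooseSum_add_ne_zero (Int.natAbs_ne_zero.2 hx))
  refine ⟨2 * B + x.natAbs, fun t ht hpar => ?_⟩
  obtain ⟨r, l, rfl, rfl⟩ : ∃ r l : ℕ, x = r - l ∧ t = r + l + 1 :=
    ⟨((t - 1 + x) / 2).toNat, ((t - 1 - x) / 2).toNat, by omega, by omega⟩
  rw [a1_eq_altChooseSum]
  refine mul_ne_zero (by positivity) (Int.cast_ne_zero.2 ?_)
  rcases le_total l r with hlr | hrl
  · rw [show r = l + ((r : ℤ) - l).natAbs by omega]
    exact hB l (by omega)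
  · rw [altChooseSum_comm, show l = r + ((r : ℤ) - l).natAbs by omega]
    exact hB r (by omega)
end

section
/- For every integer T ≥ 1, every real m > 0, every v ∈ (−1/√(1+m²), 1/√(1+m²)), and every real c, there exists an integer sequence (x_t) with x_t = v·t + o(√t) as t → ∞ such that ρ_{2π}(c, δ_t^+) does not tend to 0 as t → ∞. -/
open Complex Real Filter Asymptotics

/-- The phase `θ(x, t, m, ε)`. -/
noncomputable def theta (x t m ε : ℝ) : ℝ :=
  (t / ε) *
      (Real.arcsin (m * ε / Real.sqrt ((1 + m ^ 2 * ε ^ 2) * (1 - (x / t) ^ 2))) -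
        (x / t) * Real.arcsin (m * ε * (x / t) / Real.sqrt (1 - (x / t) ^ 2))) +
    π / 4

/-- `ρ_p(a, b)`: the distance from `b − a` to the nearest point of `pℤ`. -/
noncomputable def rho (p a b : ℝ) : ℝ := ⨅ k : ℤ, |b - a - p * k|

/-- `δ_t^− = θ(x_t, t, m) − θ(x_t − 2T, t, m)` (lattice step `ε = 1`). -/
noncomputable def deltaMinus (m : ℝ) (T : ℕ) (x : ℕ → ℤ) (t : ℕ) : ℝ :=
  theta (x t : ℝ) (t : ℝ) m 1 - theta ((x t : ℝ) - 2 * T) (t : ℝ) m 1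

/-- `δ_t^+ = θ(x_t, t, m) + θ(x_t − 2T, t, m)` (lattice step `ε = 1`). -/
noncomputable def deltaPlus (m : ℝ) (T : ℕ) (x : ℕ → ℤ) (t : ℕ) : ℝ :=
  theta (x t : ℝ) (t : ℝ) m 1 + theta ((x t : ℝ) - 2 * T) (t : ℝ) m 1

/-- `γ_t = min {ρ_{2π}(0, δ_t^−), ρ_{2π}(π, δ_t^+)}`. -/
noncomputable def gammaSeq (m : ℝ) (T : ℕ) (x : ℕ → ℤ) (t : ℕ) : ℝ :=
  min (rho (2 * π) 0 (deltaMinus m T x t)) (rho (2 * π) π (deltaPlus m T x t))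

/-!
Take `x_t = ⌊2⌊t/2⌋ v⌋`, constant on each pair `{2k, 2k+1}`. Since
`θ(x, t, m, 1) = t φ(x/t) + π/4` with `φ = phase m`, the jump `δ⁺_{2k+1} - δ⁺_{2k}` is a sum
of two discrete `t`-derivatives of the perspective `t φ(y/t)` at fixed `y`, each tending to
`φ(v) - v φ'(v) = arcsin (m / √((1 + m²)(1 - v²))) ∈ (0, π/2)`. So consecutive values of `δ⁺`
eventually differ by nearly a fixed `L ∈ (0, π)`, which is incompatible with `δ⁺_t → c`
modulo `2π`.
-/

open Topology

theorem HasStrictDerivAt.arcsin {f : ℝ → ℝ} {f' v : ℝ} (hf : HasStrictDerivAt f f' v)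
    (h : f v ^ 2 < 1) :
    HasStrictDerivAt (fun u => arcsin (f u)) (f' / √(1 - f v ^ 2)) v := by
  have h' := abs_lt.1 (sq_lt_one_iff_abs_lt_one _ |>.1 h)
  rw [← one_div_mul_eq_div]
  exact (hasStrictDerivAt_arcsin (by linarith) (by linarith)).comp v hf

theorem hasStrictDerivAt_arcsin_mul_div_sqrt {m v : ℝ} (hv : (1 + m ^ 2) * v ^ 2 < 1) :
    HasStrictDerivAt (fun u => arcsin (m * u / √(1 - u ^ 2)))
      (m / ((1 - v ^ 2) * √(1 - (1 + m ^ 2) * v ^ 2))) v := by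
  have hq : 0 < 1 - v ^ 2 := by nlinarith [sq_nonneg (m * v)]
  have hsq := Real.sq_sqrt hq.le
  have hsq0 := Real.sqrt_pos.2 hq
  have hinner : HasStrictDerivAt (fun u => m * u / √(1 - u ^ 2))
      (m / (√(1 - v ^ 2) * (1 - v ^ 2))) v := by
    have := ((hasStrictDerivAt_id v).const_mul m).div
      (((hasStrictDerivAt_pow 2 v).const_sub 1).sqrt hq.ne') hsq0.ne'
    refine this.congr_deriv ?_
    simp only [id, Nat.cast_ofNat]
    field_simp
    rw [hsq]; ring
  have hval : (m * v / √(1 - v ^ 2)) ^ 2 = m ^ 2 * v ^ 2 / (1 - v ^ 2) := by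
    rw [div_pow, hsq]; ring
  convert hinner.arcsin (by rw [hval, div_lt_one hq]; linarith) using 1
  rw [hval, show 1 - m ^ 2 * v ^ 2 / (1 - v ^ 2) = (1 - (1 + m ^ 2) * v ^ 2) / (1 - v ^ 2) by
    field_simp; ring, Real.sqrt_div' _ hq.le]
  field_simp

theorem hasStrictDerivAt_arcsin_div_sqrt {m v : ℝ} (hv : (1 + m ^ 2) * v ^ 2 < 1) :
    HasStrictDerivAt (fun u => arcsin (m / √((1 + m ^ 2) * (1 - u ^ 2))))
      (m * v / ((1 - v ^ 2) * √(1 - (1 + m ^ 2) * v ^ 2))) v := by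
  have hq : 0 < 1 - v ^ 2 := by nlinarith [sq_nonneg (m * v)]
  have hq' : 0 < (1 + m ^ 2) * (1 - v ^ 2) := by positivity
  have hsq := Real.sq_sqrt hq'.le
  have hsq0 := Real.sqrt_pos.2 hq'
  have hinner : HasStrictDerivAt (fun u => m / √((1 + m ^ 2) * (1 - u ^ 2)))
      (m * (1 + m ^ 2) * v / (√((1 + m ^ 2) * (1 - v ^ 2)) * ((1 + m ^ 2) * (1 - v ^ 2)))) v := by
    have := (hasStrictDerivAt_const v m).div
      ((((hasStrictDerivAt_pow 2 v).const_sub 1).const_mul (1 + m ^ 2)).sqrt hq'.ne') hsq0.ne'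
    refine this.congr_deriv ?_
    simp only [Nat.cast_ofNat]
    field_simp
    rw [hsq]; ring
  have hval : (m / √((1 + m ^ 2) * (1 - v ^ 2))) ^ 2 = m ^ 2 / ((1 + m ^ 2) * (1 - v ^ 2)) := by
    rw [div_pow, hsq]
  convert hinner.arcsin (by rw [hval, div_lt_one hq']; linarith) using 1
  rw [hval, show 1 - m ^ 2 / ((1 + m ^ 2) * (1 - v ^ 2)) =
    (1 - (1 + m ^ 2) * v ^ 2) / ((1 + m ^ 2) * (1 - v ^ 2)) by
    field_simp; ring, Real.sqrt_div' _ hq'.le]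
  field_simp

theorem HasStrictDerivAt.tendsto_mul_sub {ι : Type*} {l : Filter ι} {g : ℝ → ℝ} {d v L : ℝ}
    (hg : HasStrictDerivAt g d v) {a b c : ι → ℝ} (ha : Tendsto a l (𝓝 v))
    (hb : Tendsto b l (𝓝 v)) (hc : Tendsto (fun i => c i * (b i - a i)) l (𝓝 L)) :
    Tendsto (fun i => c i * (g (b i) - g (a i))) l (𝓝 (L * d)) := by
  have hlin : (fun i => g (b i) - g (a i) - (b i - a i) * d) =o[l] fun i => b i - a i :=
    hg.hasStrictFDerivAt.isLittleO.comp_tendsto (hb.prodMk_nhds ha)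
  have herr : (fun i => c i * (g (b i) - g (a i) - (b i - a i) * d)) =o[l] fun _ => (1 : ℝ) :=
    ((isBigO_refl c l).mul_isLittleO hlin).trans_isBigO (hc.isBigO_one ℝ)
  simpa using ((isLittleO_one_iff ℝ).1 herr).add (hc.mul_const d) |>.congr fun i => by ring

theorem HasStrictDerivAt.tendsto_succ_mul_sub_mul {ι : Type*} {l : Filter ι} {g : ℝ → ℝ}
    {d v : ℝ} (hg : HasStrictDerivAt g d v) {s y : ι → ℝ} (hs : Tendsto s l atTop)
    (hy : Tendsto (fun i => y i / s i) l (𝓝 v)) :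
    Tendsto (fun i => (s i + 1) * g (y i / (s i + 1)) - s i * g (y i / s i)) l
      (𝓝 (g v - v * d)) := by
  have hs1 : Tendsto (fun i => s i + 1) l atTop := tendsto_atTop_add_const_right _ 1 hs
  have hb : Tendsto (fun i => y i / (s i + 1)) l (𝓝 v) := by
    have hsmall := hy.div_atTop hs1
    rw [← sub_zero v]
    refine (hy.sub hsmall).congr' ?_
    filter_upwards [hs.eventually_gt_atTop 0] with i hi
    field_simp
    ring
  have hc : Tendsto (fun i => s i * (y i / (s i + 1) - y i / s i)) l (𝓝 (-v)) := by
    refine hb.neg.congr' ?_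
    filter_upwards [hs.eventually_gt_atTop 0] with i hi
    field_simp
    ring
  have := (hg.hasDerivAt.continuousAt.tendsto.comp hb).add (hg.tendsto_mul_sub hy hb hc)
  rw [sub_eq_add_neg, ← neg_mul]
  exact this.congr fun i => by simp only [Function.comp_apply]; ring

theorem tendsto_div_of_isBigO_sub_mul {ι : Type*} {l : Filter ι} {s y : ι → ℝ} {v : ℝ}
    (hs : Tendsto s l atTop) (hy : (fun i => y i - v * s i) =O[l] fun _ => (1 : ℝ)) :
    Tendsto (fun i => y i / s i) l (𝓝 v) := by
  have hsmall : (fun i => y i - v * s i) =o[l] s :=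
    hy.trans_isLittleO <| (isLittleO_one_left_iff ℝ).2 (tendsto_norm_atTop_atTop.comp hs)
  have := hsmall.tendsto_div_nhds_zero
  rw [← zero_add v]
  refine (this.add_const v).congr' ?_
  filter_upwards [hs.eventually_gt_atTop 0] with i hi
  field_simp
  ring

theorem norm_coe_sub_le_rho (p a b : ℝ) : ‖(b : AddCircle p) - a‖ ≤ rho p a b := by
  refine le_ciInf fun k => ?_
  have hk : ((p * k : ℝ) : AddCircle p) = 0 :=
    (AddCircle.coe_eq_zero_iff p).2 ⟨k, by rw [zsmul_eq_mul, mul_comm]⟩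
  calc ‖(b : AddCircle p) - a‖ = ‖((b - a - p * k : ℝ) : AddCircle p)‖ := by
        rw [AddCircle.coe_sub, AddCircle.coe_sub, hk, sub_zero]
    _ ≤ |b - a - p * k| := QuotientAddGroup.norm_mk_le_norm

theorem not_tendsto_rho_of_tendsto_sub {p c L : ℝ} {u : ℕ → ℝ} {φ ψ : ℕ → ℕ}
    (hφ : Tendsto φ atTop atTop) (hψ : Tendsto ψ atTop atTop)
    (hL : Tendsto (fun k => u (φ k) - u (ψ k)) atTop (𝓝 L)) (hLp : (L : AddCircle p) ≠ 0) :
    ¬ Tendsto (fun t => rho p c (u t)) atTop (𝓝 0) := by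
  intro h
  have hcirc : Tendsto (fun t => (u t : AddCircle p) - c) atTop (𝓝 0) :=
    squeeze_zero_norm (fun t => norm_coe_sub_le_rho p c (u t)) h
  have h0 : Tendsto (fun k => ((u (φ k) - u (ψ k) : ℝ) : AddCircle p)) atTop (𝓝 0) := by
    simpa using (hcirc.comp hφ).sub (hcirc.comp hψ)
  exact hLp (tendsto_nhds_unique ((AddCircle.continuous_mk' p).tendsto L |>.comp hL) h0)

noncomputable def phase (m u : ℝ) : ℝ :=
  arcsin (m / √((1 + m ^ 2) * (1 - u ^ 2))) - u * arcsin (m * u / √(1 - u ^ 2))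

theorem theta_one (x t m : ℝ) : theta x t m 1 = t * phase m (x / t) + π / 4 := by
  simp [theta, phase]

theorem hasStrictDerivAt_phase {m v : ℝ} (hv : (1 + m ^ 2) * v ^ 2 < 1) :
    HasStrictDerivAt (phase m) (-arcsin (m * v / √(1 - v ^ 2))) v := by
  refine ((hasStrictDerivAt_arcsin_div_sqrt hv).sub
    ((hasStrictDerivAt_id v).mul (hasStrictDerivAt_arcsin_mul_div_sqrt hv))).congr_deriv ?_
  simp only [id]
  ring

theorem tendsto_deltaPlus_two_mul_add_one_sub {m v : ℝ} (T : ℕ) (hv : (1 + m ^ 2) * v ^ 2 < 1)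
    {x : ℕ → ℤ} (hx : (fun t : ℕ => (x t : ℝ) - v * t) =O[atTop] fun _ => (1 : ℝ))
    (hpair : ∀ k, x (2 * k + 1) = x (2 * k)) :
    Tendsto (fun k => deltaPlus m T x (2 * k + 1) - deltaPlus m T x (2 * k)) atTop
      (𝓝 (2 * arcsin (m / √((1 + m ^ 2) * (1 - v ^ 2))))) := by
  have h2k : Tendsto (fun k : ℕ => (2 * k : ℝ)) atTop atTop :=
    tendsto_natCast_atTop_atTop.const_mul_atTop two_pos
  have hx2 : (fun k : ℕ => (x (2 * k) : ℝ) - v * (2 * k)) =O[atTop] fun _ => (1 : ℝ) := by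
    refine (hx.comp_tendsto (tendsto_id.const_mul_atTop' two_pos)).congr_left fun k => ?_
    simp
  have hx2T : (fun k : ℕ => ((x (2 * k) : ℝ) - 2 * T) - v * (2 * k)) =O[atTop]
      fun _ => (1 : ℝ) :=
    (hx2.sub (isBigO_const_one ℝ (2 * (T : ℝ)) atTop)).congr_left fun k => by ring
  have hd := hasStrictDerivAt_phase hv
  have h := (hd.tendsto_succ_mul_sub_mul h2k (tendsto_div_of_isBigO_sub_mul h2k hx2)).add
    (hd.tendsto_succ_mul_sub_mul h2k (tendsto_div_of_isBigO_sub_mul h2k hx2T))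
  have hlim : 2 * arcsin (m / √((1 + m ^ 2) * (1 - v ^ 2))) =
      2 * (phase m v - v * -arcsin (m * v / √(1 - v ^ 2))) := by
    simp only [phase]
    ring
  rw [hlim, two_mul]
  refine h.congr fun k => ?_
  simp only [deltaPlus, theta_one, hpair]
  push_cast
  ring

noncomputable def pairedFloor (v : ℝ) (t : ℕ) : ℤ := ⌊v * ↑(2 * (t / 2))⌋

theorem pairedFloor_two_mul_add_one (v : ℝ) (k : ℕ) :
    pairedFloor v (2 * k + 1) = pairedFloor v (2 * k) := by
  simp only [pairedFloor]
  congr 3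
  omega

theorem isBigO_pairedFloor_sub (v : ℝ) :
    (fun t : ℕ => (pairedFloor v t : ℝ) - v * t) =O[atTop] fun _ => (1 : ℝ) := by
  refine .of_bound (1 + |v|) (.of_forall fun t => ?_)
  have h1 : ((2 * (t / 2) : ℕ) : ℝ) ≤ t := by exact_mod_cast Nat.mul_div_le t 2
  have h2 : (t : ℝ) ≤ ((2 * (t / 2) : ℕ) : ℝ) + 1 := by
    exact_mod_cast (by omega : t ≤ 2 * (t / 2) + 1)
  set s : ℝ := ((2 * (t / 2) : ℕ) : ℝ)
  have hfloor : |(⌊v * s⌋ : ℝ) - v * s| ≤ 1 := by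
    rw [abs_sub_comm, abs_of_nonneg (Int.self_sub_floor (v * s) ▸ Int.fract_nonneg _)]
    exact (Int.self_sub_floor (v * s) ▸ Int.fract_lt_one _).le
  have hs : |s - t| ≤ 1 := abs_le.2 ⟨by linarith, by linarith⟩
  rw [norm_one, mul_one, Real.norm_eq_abs, pairedFloor]
  calc |(⌊v * s⌋ : ℝ) - v * t| = |((⌊v * s⌋ : ℝ) - v * s) + v * (s - t)| := by ring_nf
    _ ≤ |(⌊v * s⌋ : ℝ) - v * s| + |v| * |s - t| := (abs_add_le _ _).trans_eq (by rw [abs_mul])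
    _ ≤ 1 + |v| := by nlinarith [abs_nonneg v]

theorem one_add_sq_mul_sq_lt_one_of_mem_Ioo {m v : ℝ}
    (hv : v ∈ Set.Ioo (-(1 / √(1 + m ^ 2))) (1 / √(1 + m ^ 2))) : (1 + m ^ 2) * v ^ 2 < 1 := by
  have h := sq_lt_sq' hv.1 hv.2
  rw [div_pow, one_pow, Real.sq_sqrt (by positivity), lt_div_iff₀ (by positivity)] at h
  linarith

theorem coe_two_mul_arcsin_ne_zero {m v : ℝ} (hm : 0 < m) (hv : (1 + m ^ 2) * v ^ 2 < 1) :
    ((2 * arcsin (m / √((1 + m ^ 2) * (1 - v ^ 2))) : ℝ) : AddCircle (2 * π)) ≠ 0 := by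
  have hq : 0 < (1 + m ^ 2) * (1 - v ^ 2) := by nlinarith [sq_nonneg (m * v)]
  have hpos : 0 < arcsin (m / √((1 + m ^ 2) * (1 - v ^ 2))) := arcsin_pos.2 (by positivity)
  have hlt : arcsin (m / √((1 + m ^ 2) * (1 - v ^ 2))) < π / 2 :=
    arcsin_lt_pi_div_two.2 <| (div_lt_one (Real.sqrt_pos.2 hq)).2 <|
      (Real.lt_sqrt hm.le).2 (by linarith)
  have : Fact (0 < 2 * π) := ⟨by positivity⟩
  rw [Ne, AddCircle.coe_eq_zero_iff_of_mem_Ico ⟨by linarith, by linarith⟩]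
  exact (mul_pos two_pos hpos).ne'

theorem stmt12_general (T : ℕ) (m : ℝ) (hm : 0 < m)
    (v : ℝ) (hv : v ∈ Set.Ioo (-(1 / Real.sqrt (1 + m ^ 2))) (1 / Real.sqrt (1 + m ^ 2)))
    (c : ℝ) :
    ∃ x : ℕ → ℤ,
      ((fun t : ℕ => (x t : ℝ) - v * t) =o[Filter.atTop]
        (fun t : ℕ => (t : ℝ) ^ ((1 : ℝ) / 2))) ∧
      ¬ Filter.Tendsto (fun t : ℕ => rho (2 * π) c (deltaPlus m T x t))
          Filter.atTop (nhds 0) := by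
  have hv' := one_add_sq_mul_sq_lt_one_of_mem_Ioo hv
  have hO := isBigO_pairedFloor_sub v
  refine ⟨pairedFloor v, hO.trans_isLittleO ?_, ?_⟩
  · exact (isLittleO_one_left_iff ℝ).2 <| tendsto_norm_atTop_atTop.comp <|
      (tendsto_rpow_atTop (by norm_num)).comp tendsto_natCast_atTop_atTop
  · exact not_tendsto_rho_of_tendsto_sub
      (tendsto_atTop_mono (fun k => by dsimp; omega) tendsto_id)
      (tendsto_atTop_mono (fun k => by dsimp; omega) tendsto_id)
      (tendsto_deltaPlus_two_mul_add_one_sub T hv' hO (pairedFloor_two_mul_add_one v))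
      (coe_two_mul_arcsin_ne_zero hm hv')

theorem stmt12 (T : ℕ) (hT : 1 ≤ T) (m : ℝ) (hm : 0 < m)
    (v : ℝ) (hv : v ∈ Set.Ioo (-(1 / Real.sqrt (1 + m ^ 2))) (1 / Real.sqrt (1 + m ^ 2)))
    (c : ℝ) :
    ∃ x : ℕ → ℤ,
      ((fun t : ℕ => (x t : ℝ) - v * t) =o[Filter.atTop]
        (fun t : ℕ => (t : ℝ) ^ ((1 : ℝ) / 2))) ∧
      ¬ Filter.Tendsto (fun t : ℕ => rho (2 * π) c (deltaPlus m T x t))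
          Filter.atTop (nhds 0) :=
  stmt12_general T m hm v hv c
end

section
/- For all positive integers w and h, the real number 2^{(h+w−1)/2} · Re a(h − w, h + w) equals the number of Young diagrams of size w×h with an odd number of steps minus the number of Young diagrams of size w×h with an even number of steps. -/
/-!
A checker path with `n + 1` right and `w` left moves is recorded by the set `R` of times of its
right moves. The real part of `I * (-I) ^ turns` vanishes when the number of turns is even. Along
a path starting with a right move, right and left turns alternate, so the number of turns is odd
exactly when the path ends with a left move, and then the real part is `(-1) ^ r`, where `r` is
the number of left-to-right turns. These paths are the boundaries of the Young diagrams of size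
`w × (n + 1)`, and the diagram has `r + 1` steps.
-/

open Complex Real Filter Asymptotics

/-- `f : Fin h → ℕ` encodes a Young diagram of size `w × h`: a nondecreasing
sequence of positive integers `x₁ ≤ … ≤ x_h` with `x_h = w` (equivalently, for
a monotone sequence: all values are `≤ w` and the value `w` is attained). -/
def IsYoungDiagram (w : ℕ) {h : ℕ} (f : Fin h → ℕ) : Prop :=
  Monotone f ∧ (∀ i, 1 ≤ f i) ∧ (∀ i, f i ≤ w) ∧ (∃ i, f i = w)

/-- The number of steps of a Young diagram: the number of distinct values
among `x₁, …, x_h`. -/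
def numSteps {h : ℕ} (f : Fin h → ℕ) : ℕ := (Finset.univ.image f).card

/-- The number of Young diagrams of size `w × h` whose number of steps
satisfies the predicate `p`. -/
noncomputable def youngCount (w h : ℕ) (p : ℕ → Prop) : ℕ :=
  Nat.card {f : Fin h → ℕ // IsYoungDiagram w f ∧ p (numSteps f)}

open Finset

lemma Fin.card_image_univ_eq_card_filter_lt_add_one {α : Type*} [LinearOrder α] :
    ∀ {n : ℕ} {f : Fin (n + 1) → α}, Monotone f →
      #(univ.image f) = #{j : Fin n | f j.castSucc < f j.succ} + 1
  | 0, f, _ => by simp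
  | n + 1, f, hf => by
    have hmem : f (Fin.last (n + 1)) ∈ univ.image (f ∘ Fin.castSucc) ↔
        f (Fin.last n).castSucc = f (Fin.last (n + 1)) := by
      refine ⟨fun hx => ?_, fun hx => mem_image.2 ⟨Fin.last n, mem_univ _, hx⟩⟩
      obtain ⟨i, -, hi⟩ := mem_image.1 hx
      exact le_antisymm (hf (Fin.le_last _))
        (hi ▸ hf (Fin.castSucc_le_castSucc_iff.2 (Fin.le_last i)))
    have ih : #(univ.image (f ∘ Fin.castSucc)) =
        #{j : Fin n | f j.castSucc.castSucc < f j.castSucc.succ} + 1 := by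
      simpa [← Fin.succ_castSucc] using
        Fin.card_image_univ_eq_card_filter_lt_add_one (hf.comp Fin.strictMono_castSucc.monotone)
    rw [Fin.univ_castSuccEmb, cons_eq_insert, image_insert, map_eq_image, image_image,
      Fin.coe_castSuccEmb, card_filter, Fin.sum_univ_castSucc, ← card_filter, Fin.succ_last]
    by_cases heq : f (Fin.last n).castSucc = f (Fin.last (n + 1))
    · rw [insert_eq_of_mem (hmem.2 heq), ih, if_neg heq.not_lt, add_zero]
    · have hlt := lt_of_le_of_ne (hf (Fin.le_last _)) heq
      rw [card_insert_of_notMem (mt hmem.1 heq), ih, if_pos hlt]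

lemma StrictMono.add_sub_le {m : ℕ} {e : Fin m → ℕ} (he : StrictMono e) {i j : Fin m}
    (hij : i ≤ j) :
    e i + (j - i : ℕ) ≤ e j := by
  have := card_le_card_of_injOn e (s := Icc i j) (t := Icc (e i) (e j))
    (fun x hx => by
      simp only [coe_Icc, Set.mem_Icc] at hx ⊢
      exact ⟨he.monotone hx.1, he.monotone hx.2⟩) he.injective.injOn
  simp only [Fin.card_Icc, Nat.card_Icc] at this
  omega

lemma StrictMono.eq_of_image_univ_eq {α : Type*} [LinearOrder α] {k : ℕ} {e e' : Fin k → α}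
    (he : StrictMono e) (he' : StrictMono e') (h : univ.image e = univ.image e') : e = e' := by
  have hc : #(univ.image e) = k := by rw [card_image_of_injective _ he.injective, card_fin]
  exact (orderEmbOfFin_unique hc (fun x => mem_image_of_mem e (mem_univ x)) he).trans
    (orderEmbOfFin_unique hc (fun x => h ▸ mem_image_of_mem e' (mem_univ x)) he').symm

lemma Finset.sum_neg_one_pow_eq_card_sub_card {ι : Type*} (s : Finset ι) (g : ι → ℕ) :
    ∑ i ∈ s, (-1 : ℝ) ^ g i = #{i ∈ s | Even (g i)} - #{i ∈ s | ¬Even (g i)} := by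
  rw [← sum_filter_add_sum_filter_not s (fun i => Even (g i)),
    sum_congr rfl fun i hi => (mem_filter.1 hi).2.neg_one_pow,
    sum_congr rfl fun i hi => (Nat.not_even_iff_odd.1 (mem_filter.1 hi).2).neg_one_pow]
  simp [sub_eq_add_neg]

lemma IsYoungDiagram.apply_last {w n : ℕ} {f : Fin (n + 1) → ℕ} (hf : IsYoungDiagram w f) :
    f (Fin.last n) = w :=
  let ⟨i, hi⟩ := hf.2.2.2
  le_antisymm (hf.2.2.1 _) (hi ▸ hf.1 (Fin.le_last i))

namespace FeynmanCheckers

variable {w n : ℕ}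

def rightTurns (T : ℕ) (R : Finset ℕ) : ℕ := #{i ∈ Ico 1 T | i ∈ R ∧ i - 1 ∉ R}

def leftTurns (T : ℕ) (R : Finset ℕ) : ℕ := #{i ∈ Ico 1 T | i ∉ R ∧ i - 1 ∈ R}

lemma turnsOf_eq_rightTurns_add_leftTurns (T : ℕ) (R : Finset ℕ) :
    turnsOf T R = rightTurns T R + leftTurns T R := by
  rw [turnsOf, rightTurns, leftTurns, ← card_union_of_disjoint, ← filter_or]
  · congr 1
    exact filter_congr fun i _ => by tauto
  · exact disjoint_filter.2 fun i _ => by tauto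

lemma rightTurns_add_one (T : ℕ) (R : Finset ℕ) :
    rightTurns (T + 2) R = rightTurns (T + 1) R + if T + 1 ∈ R ∧ T ∉ R then 1 else 0 := by
  simp only [rightTurns, card_filter]
  exact sum_Ico_succ_top (by omega) _

lemma leftTurns_add_one (T : ℕ) (R : Finset ℕ) :
    leftTurns (T + 2) R = leftTurns (T + 1) R + if T + 1 ∉ R ∧ T ∈ R then 1 else 0 := by
  simp only [leftTurns, card_filter]
  exact sum_Ico_succ_top (by omega) _

/-- Right and left turns alternate along the path. -/
lemma rightTurns_add_ite_eq (T : ℕ) (R : Finset ℕ) :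
    rightTurns (T + 1) R + (if 0 ∈ R then 1 else 0) =
      leftTurns (T + 1) R + (if T ∈ R then 1 else 0) := by
  induction T with
  | zero => simp [rightTurns, leftTurns]
  | succ T ih =>
    rw [rightTurns_add_one, leftTurns_add_one]
    by_cases hT : T ∈ R <;> by_cases hT' : T + 1 ∈ R <;> simp [hT, hT'] at ih ⊢ <;> omega

lemma turnsOf_of_zero_mem {T : ℕ} {R : Finset ℕ} (h0 : 0 ∈ R) :
    turnsOf (T + 1) R = 2 * rightTurns (T + 1) R + if T ∈ R then 0 else 1 := by
  have := rightTurns_add_ite_eq T R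
  rw [turnsOf_eq_rightTurns_add_leftTurns]
  split_ifs at this ⊢ <;> omega

lemma re_I_mul_neg_I_pow_turnsOf {T : ℕ} {R : Finset ℕ} (h0 : 0 ∈ R) :
    (I * (-I) ^ turnsOf (T + 1) R).re = if T ∈ R then 0 else (-1) ^ rightTurns (T + 1) R := by
  have hI : (-I) ^ 2 = -1 := by rw [neg_sq, I_sq]
  rw [turnsOf_of_zero_mem h0]
  rcases Nat.even_or_odd (rightTurns (T + 1) R) with h | h <;>
    split_ifs <;> simp [pow_succ, pow_mul, hI, h.neg_one_pow]

/-- Reading the boundary of the diagram from the end of its last row, each row gives a right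
move and each unit drop of the row length a left move; `rightMoves w f k` is the time of the
`k`-th right move. -/
def rightMoves (w : ℕ) (f : Fin (n + 1) → ℕ) (k : Fin (n + 1)) : ℕ := w + k - f k.rev

def ofRightMoves (w : ℕ) (e : Fin (n + 1) → ℕ) (i : Fin (n + 1)) : ℕ := w + i.rev - e i.rev

section YoungDiagram

variable {f : Fin (n + 1) → ℕ} (hf : IsYoungDiagram w f)
include hf

lemma strictMono_rightMoves : StrictMono (rightMoves w f) := fun a b hab => by
  have := hf.1 (Fin.rev_le_rev.2 hab.le)
  have := hf.2.2.1 a.rev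
  rw [Fin.lt_def] at hab
  simp only [rightMoves]
  omega

lemma rightMoves_zero : rightMoves w f 0 = 0 := by
  simp [rightMoves, hf.apply_last]

lemma rightMoves_lt (k : Fin (n + 1)) : rightMoves w f k < n + w := by
  have := hf.2.1 k.rev
  have := hf.2.2.1 k.rev
  have := k.is_le
  simp only [rightMoves]
  omega

lemma ofRightMoves_rightMoves : ofRightMoves w (rightMoves w f) = f := funext fun i => by
  have := hf.2.2.1 i
  simp only [ofRightMoves, rightMoves, Fin.rev_rev]
  omega

end YoungDiagram

section RightMoves

variable {e : Fin (n + 1) → ℕ} (he : StrictMono e) (h0 : e 0 = 0)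
  (hlast : e (Fin.last n) < n + w)
include he h0 hlast

lemma le_apply_lt_add (k : Fin (n + 1)) : k ≤ e k ∧ e k < k + w := by
  have h1 := he.add_sub_le (Fin.zero_le k)
  have h2 := he.add_sub_le (Fin.le_last k)
  simp only [Fin.val_zero, Fin.val_last] at h1 h2
  omega

lemma isYoungDiagram_ofRightMoves : IsYoungDiagram w (ofRightMoves w e) := by
  have hb := le_apply_lt_add he h0 hlast
  refine ⟨fun i j hij => ?_, fun i => ?_, fun i => ?_,
    ⟨Fin.last n, by simp [ofRightMoves, h0]⟩⟩
  · have := he.add_sub_le (Fin.rev_le_rev.2 hij)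
    have := hb j.rev
    simp only [ofRightMoves, Fin.val_rev] at *
    omega
  all_goals have := hb i.rev; simp only [ofRightMoves]; omega

lemma rightMoves_ofRightMoves : rightMoves w (ofRightMoves w e) = e := funext fun k => by
  have := le_apply_lt_add he h0 hlast k
  simp only [ofRightMoves, rightMoves, Fin.rev_rev]
  omega

end RightMoves

lemma rightTurns_image_univ {T : ℕ} {e : Fin (n + 1) → ℕ} (he : StrictMono e) (h0 : e 0 = 0)
    (hT : ∀ k, e k < T) :
    rightTurns T (univ.image e) = #{k : Fin n | e k.castSucc + 1 < e k.succ} := by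
  symm
  refine card_nbij (fun k => e k.succ) (fun k hk => ?_)
    (he.injective.comp (Fin.succ_injective _)).injOn (fun x hx => ?_)
  · simp only [coe_filter, mem_univ, true_and, Set.mem_ofPred_eq] at hk
    simp only [coe_filter, mem_Ico, mem_image, mem_univ, true_and, Set.mem_ofPred_eq]
    refine ⟨⟨by omega, hT _⟩, ⟨_, rfl⟩, fun ⟨j, hj⟩ => ?_⟩
    have hlt : j < k.succ := he.lt_iff_lt.1 (by omega)
    have := he.monotone (Fin.le_castSucc_iff.2 hlt)
    omega
  · simp only [coe_filter, mem_Ico, mem_image, mem_univ, true_and, Set.mem_ofPred_eq] at hx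
    obtain ⟨⟨hx1, -⟩, ⟨j, rfl⟩, hprev⟩ := hx
    obtain ⟨k, rfl⟩ := Fin.exists_succ_eq.2 (show j ≠ 0 by rintro rfl; omega)
    have := he (Fin.castSucc_lt_succ (i := k))
    have : e k.castSucc ≠ e k.succ - 1 := fun h => hprev ⟨k.castSucc, h⟩
    refine ⟨k, ?_, rfl⟩
    simp only [coe_filter, mem_univ, true_and, Set.mem_ofPred_eq]
    omega

lemma numSteps_eq_rightTurns_add_one {f : Fin (n + 1) → ℕ} (hf : IsYoungDiagram w f) :
    numSteps f = rightTurns (n + w + 1) (univ.image (rightMoves w f)) + 1 := by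
  rw [numSteps, Fin.card_image_univ_eq_card_filter_lt_add_one hf.1,
    rightTurns_image_univ (strictMono_rightMoves hf) (rightMoves_zero hf)
      fun k => (rightMoves_lt hf k).trans (Nat.lt_succ_self _)]
  congr 1
  refine card_equiv Fin.revPerm fun j => ?_
  have := hf.2.2.1 j.castSucc
  have := hf.2.2.1 j.succ
  simp only [mem_filter, mem_univ, true_and, Fin.revPerm_apply, rightMoves, Fin.rev_castSucc,
    Fin.rev_succ, Fin.rev_rev, Fin.val_castSucc, Fin.val_succ, Fin.val_rev]
  omega

def rightLeftPaths (n w : ℕ) : Finset (Finset ℕ) :=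
  {R ∈ (range (n + w + 1)).powerset | 0 ∈ R ∧ #R = n + 1 ∧ n + w ∉ R}

lemma image_rightMoves_mem_rightLeftPaths {f : Fin (n + 1) → ℕ} (hf : IsYoungDiagram w f) :
    univ.image (rightMoves w f) ∈ rightLeftPaths n w := by
  have hlt := rightMoves_lt hf
  simp only [rightLeftPaths, mem_filter, mem_powerset, mem_image, mem_univ, true_and]
  refine ⟨fun x hx => ?_, ⟨0, rightMoves_zero hf⟩, ?_, fun ⟨k, hk⟩ => (hlt k).ne hk⟩
  · obtain ⟨k, -, rfl⟩ := mem_image.1 hx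
    exact mem_range.2 ((hlt k).trans (Nat.lt_succ_self _))
  · rw [card_image_of_injective _ (strictMono_rightMoves hf).injective, card_fin]

lemma exists_image_rightMoves_eq {R : Finset ℕ} (hR : R ∈ rightLeftPaths n w) :
    ∃ f : Fin (n + 1) → ℕ, IsYoungDiagram w f ∧ univ.image (rightMoves w f) = R := by
  simp only [rightLeftPaths, mem_filter, mem_powerset] at hR
  obtain ⟨hsub, h0, hcard, hlast⟩ := hR
  set e := R.orderEmbOfFin hcard
  have hmem : ∀ k, e k ∈ R := R.orderEmbOfFin_mem hcard
  have he0 : e 0 = 0 :=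
    Nat.le_zero.1 ((orderEmbOfFin_zero hcard n.succ_pos).trans_le (min'_le R 0 h0))
  have helast : e (Fin.last n) < n + w := by
    have := mem_range.1 (hsub (hmem (Fin.last n)))
    have := ne_of_mem_of_not_mem (hmem (Fin.last n)) hlast
    omega
  refine ⟨ofRightMoves w e, isYoungDiagram_ofRightMoves e.strictMono he0 helast, ?_⟩
  rw [rightMoves_ofRightMoves e.strictMono he0 helast, image_orderEmbOfFin_univ]

lemma youngCount_eq_card_filter (p : ℕ → Prop) [DecidablePred p] :
    youngCount w (n + 1) p = #{R ∈ rightLeftPaths n w | p (rightTurns (n + w + 1) R + 1)} := by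
  rw [youngCount, ← Nat.card_eq_finsetCard]
  refine Nat.card_congr (.ofBijective (fun f => ⟨univ.image (rightMoves w f.1),
    mem_filter.2 ⟨image_rightMoves_mem_rightLeftPaths f.2.1,
      numSteps_eq_rightTurns_add_one f.2.1 ▸ f.2.2⟩⟩)
    ⟨fun f g hfg => Subtype.ext ?_, fun ⟨R, hR⟩ => ?_⟩)
  · rw [← ofRightMoves_rightMoves f.2.1, ← ofRightMoves_rightMoves g.2.1,
      (strictMono_rightMoves f.2.1).eq_of_image_univ_eq (strictMono_rightMoves g.2.1)
        (congrArg Subtype.val hfg)]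
  · obtain ⟨hR, hp⟩ := mem_filter.1 hR
    obtain ⟨f, hf, rfl⟩ := exists_image_rightMoves_eq hR
    exact ⟨⟨f, hf, numSteps_eq_rightTurns_add_one hf ▸ hp⟩, rfl⟩

lemma wf_eq_waveA (X : ℤ) (T : ℕ) : wf X T 1 1 = waveA X T 1 := by
  simp [wf]

lemma two_rpow_mul_re_waveA (X : ℤ) (T : ℕ) :
    (2 : ℝ) ^ ((T - 1 : ℝ) / 2) * (waveA X T 1).re =
      ∑ R ∈ (range T).powerset with 0 ∈ R ∧ 2 * (#R : ℤ) - T = X,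
        (I * (-I) ^ turnsOf T R).re := by
  have hnorm : (2 : ℝ) ^ ((T - 1 : ℝ) / 2) * (1 + 1 ^ 2 : ℝ) ^ ((1 - T : ℝ) / 2) = 1 := by
    rw [one_pow, one_add_one_eq_two, ← Real.rpow_add two_pos]
    ring_nf
    exact Real.rpow_zero 2
  rw [waveA, mul_assoc, re_ofReal_mul, ← mul_assoc, hnorm, one_mul, mul_sum, re_sum, sum_filter]
  simp only [ofReal_one, mul_one, mul_ite, mul_zero, apply_ite re, zero_re]

lemma sum_re_turnsOf_eq_youngCount_sub :
    ∑ R ∈ (range (n + w + 1)).powerset with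
        0 ∈ R ∧ 2 * (#R : ℤ) - (n + w + 1 : ℕ) = (n + 1 : ℕ) - w,
        (I * (-I) ^ turnsOf (n + w + 1) R).re =
      (youngCount w (n + 1) Odd : ℝ) - youngCount w (n + 1) Even := by
  calc _ = ∑ R ∈ rightLeftPaths n w, (-1 : ℝ) ^ rightTurns (n + w + 1) R := by
        rw [rightLeftPaths, sum_filter, sum_filter]
        refine sum_congr rfl fun R _ => ?_
        by_cases h0 : 0 ∈ R
        · have hcard : 2 * (#R : ℤ) - (n + w + 1 : ℕ) = (n + 1 : ℕ) - w ↔ #R = n + 1 := by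
            push_cast
            omega
          rw [re_I_mul_neg_I_pow_turnsOf h0]
          simp only [h0, hcard, true_and]
          by_cases hlast : n + w ∈ R <;> simp [hlast]
        · simp [h0]
    _ = _ := by
        rw [sum_neg_one_pow_eq_card_sub_card, youngCount_eq_card_filter, youngCount_eq_card_filter]
        simp [Nat.odd_add_one, Nat.even_add_one]

end FeynmanCheckers

open FeynmanCheckers

theorem stmt13_general (w h : ℕ) (hh : 0 < h) :
    (2 : ℝ) ^ (((h : ℝ) + (w : ℝ) - 1) / 2) *
        (wf ((h : ℝ) - (w : ℝ)) ((h : ℝ) + (w : ℝ)) 1 1).re =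
      (youngCount w h Odd : ℝ) - (youngCount w h Even : ℝ) := by
  obtain ⟨n, rfl⟩ : ∃ n, h = n + 1 := ⟨h - 1, by omega⟩
  have hX : ((n + 1 : ℕ) : ℝ) - w = (((n + 1 : ℕ) - w : ℤ) : ℝ) := by push_cast; ring
  have hT : ((n + 1 : ℕ) : ℝ) + w = ((n + w + 1 : ℕ) : ℝ) := by push_cast; ring
  rw [hX, hT, wf_eq_waveA, two_rpow_mul_re_waveA, sum_re_turnsOf_eq_youngCount_sub]

theorem stmt13 (w h : ℕ) (hw : 0 < w) (hh : 0 < h) :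
    (2 : ℝ) ^ (((h : ℝ) + (w : ℝ) - 1) / 2) *
        (wf ((h : ℝ) - (w : ℝ)) ((h : ℝ) + (w : ℝ)) 1 1).re =
      (youngCount w h Odd : ℝ) - (youngCount w h Even : ℝ) :=
  stmt13_general w h hh
end
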